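/- arXiv:2205.11087 — 2 statements merged into one kernel-verified Lean document; each statement's English description precedes it below -/
import Mathlib

section
/- For a semi-Markov decision process with finite state space and bounded rewards, if the expected holding time y(s,π(s)) between decision epochs is bounded below by a positive constant, then the long-term average reward R_π(s) = lim_{G→∞} E[Σ_{g=0}^G r(s_g,π(s_g)) | s_0=s] / E[Σ_{g=0}^G τ_g | s_0=s] exists and equals (T̄_π r)(s) / (T̄_π y)(s). -/
open Filter Finset Matrix

/-! Dividing numerator and denominator by `G + 1` turns both into Cesàro means, which converge to
`(T̄ r)(s)` and `(T̄ y)(s)`. Every power of the stochastic matrix `T` averages `y`, so each Cesàro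
mean of `y` is at least `c`, hence so is `(T̄ y)(s)`, and the quotient of the limits is legitimate. -/

namespace Matrix

variable {ι : Type*} [Fintype ι] [DecidableEq ι]

lemma le_mulVec_of_mem_rowStochastic {M : Matrix ι ι ℝ} (hM : M ∈ rowStochastic ℝ ι)
    {c : ℝ} {y : ι → ℝ} (hy : ∀ j, c ≤ y j) (i : ι) : c ≤ (M *ᵥ y) i := by
  have h := nonneg_mulVec_of_mem_rowStochastic hM (x := y - c • 1)
    (fun j => by simpa using hy j) i
  rw [mulVec_sub, mulVec_smul, one_vecMul_of_mem_rowStochastic hM] at h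
  simpa using h

lemma tendsto_cesaro_mulVec_apply {T Tbar : Matrix ι ι ℝ}
    (hlim : Tendsto (fun G : ℕ => (G : ℝ)⁻¹ • ∑ g ∈ range G, T ^ g) atTop (nhds Tbar))
    (v : ι → ℝ) (i : ι) :
    Tendsto (fun G : ℕ => (∑ g ∈ range (G + 1), (T ^ g *ᵥ v) i) / (G + 1))
      atTop (nhds ((Tbar *ᵥ v) i)) := by
  have hcont : Continuous fun M : Matrix ι ι ℝ => (M *ᵥ v) i := by fun_prop
  refine ((hcont.tendsto Tbar).comp (hlim.comp (tendsto_add_atTop_nat 1))).congr fun G => ?_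
  simp [smul_mulVec, sum_mulVec, Finset.sum_apply, div_eq_inv_mul]

lemma le_cesaro_limit_mulVec_apply {T Tbar : Matrix ι ι ℝ} (hT : T ∈ rowStochastic ℝ ι)
    (hlim : Tendsto (fun G : ℕ => (G : ℝ)⁻¹ • ∑ g ∈ range G, T ^ g) atTop (nhds Tbar))
    {c : ℝ} {y : ι → ℝ} (hy : ∀ j, c ≤ y j) (i : ι) : c ≤ (Tbar *ᵥ y) i := by
  refine ge_of_tendsto' (tendsto_cesaro_mulVec_apply hlim y i) fun G => ?_
  rw [le_div_iff₀ (by positivity)]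
  have := card_nsmul_le_sum (range (G + 1)) _ c fun g _ =>
    le_mulVec_of_mem_rowStochastic (pow_mem hT g) hy i
  simpa [mul_comm] using this

end Matrix

/-- For a finite-state semi-Markov decision process under a stationary policy with
embedded chain transition matrix `T` (whose Cesàro limit `T̄` exists), expected
immediate rewards `r` and expected holding times `y` bounded below by `c > 0`, the
long-term average reward
`R(s) = lim_G E[∑_{g≤G} r(s_g)] / E[∑_{g≤G} τ_g]` exists and equals
`(T̄ r)(s) / (T̄ y)(s)`. -/
theorem smdp_average_reward_exists {n : ℕ} (T Tbar : Matrix (Fin n) (Fin n) ℝ)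
    (r y : Fin n → ℝ) (c : ℝ) (hc : 0 < c) (hy : ∀ s, c ≤ y s)
    (hnonneg : ∀ s s', 0 ≤ T s s')
    (hrow : ∀ s, ∑ s', T s s' = 1)
    (hlim : Tendsto (fun G : ℕ => (G : ℝ)⁻¹ • ∑ g ∈ Finset.range G, T ^ g)
      atTop (nhds Tbar)) (s : Fin n) :
    Tendsto
      (fun G : ℕ =>
        (∑ g ∈ Finset.range (G + 1), ((T ^ g) *ᵥ r) s) /
          (∑ g ∈ Finset.range (G + 1), ((T ^ g) *ᵥ y) s))
      atTop (nhds ((Tbar *ᵥ r) s / (Tbar *ᵥ y) s)) := by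
  have hT : T ∈ rowStochastic ℝ (Fin n) := mem_rowStochastic_iff_sum.2 ⟨hnonneg, hrow⟩
  have hTbar_y : (Tbar *ᵥ y) s ≠ 0 :=
    (hc.trans_le (le_cesaro_limit_mulVec_apply hT hlim hy s)).ne'
  refine ((tendsto_cesaro_mulVec_apply hlim r s).div
    (tendsto_cesaro_mulVec_apply hlim y s) hTbar_y).congr fun G => ?_
  exact div_div_div_cancel_right₀ (by positivity) _ _
end

section
/- For an irreducible finite stochastic matrix T, every row of the Cesàro limit T̄ equals the unique stationary distribution μ of T, i.e., T̄(s,s') = μ(s') for all s, s'. -/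
open Filter Finset Matrix

/-- For an irreducible finite stochastic matrix `T` with stationary distribution `μ`,
every row of the Cesàro limit `T̄` equals `μ`. -/
theorem cesaro_limit_rows_eq_stationary {n : ℕ} (T Tbar : Matrix (Fin n) (Fin n) ℝ)
    (μ : Fin n → ℝ)
    (hnonneg : ∀ s s', 0 ≤ T s s')
    (hrow : ∀ s, ∑ s', T s s' = 1)
    (hirred : ∀ s s', ∃ m ≥ 1, 0 < (T ^ m) s s')
    (hstat : μ ᵥ* T = μ) (hsum : ∑ s, μ s = 1) (hpos : ∀ s, 0 < μ s)
    (hlim : Tendsto (fun G : ℕ => (G : ℝ)⁻¹ • ∑ g ∈ Finset.range G, T ^ g)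
      atTop (nhds Tbar)) :
    ∀ s s', Tbar s s' = μ s' := by
  -- powers of T are nonnegative with row sums 1
  have hpownn : ∀ m a b, 0 ≤ (T ^ m) a b := by
    intro m
    induction m with
    | zero =>
      intro a b
      simp only [pow_zero, Matrix.one_apply]
      split <;> norm_num
    | succ m ih =>
      intro a b
      rw [pow_succ, Matrix.mul_apply]
      exact Finset.sum_nonneg fun c _ => mul_nonneg (ih a c) (hnonneg c b)
  have hpowrow : ∀ m a, ∑ b, (T ^ m) a b = 1 := by
    intro m
    induction m with
    | zero => intro a; simp [Matrix.one_apply]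
    | succ m ih =>
      intro a
      simp only [pow_succ, Matrix.mul_apply]
      rw [Finset.sum_comm]
      simp_rw [← Finset.mul_sum, hrow, mul_one]
      exact ih a
  have hpowbd : ∀ m a b, (T ^ m) a b ≤ 1 := by
    intro m a b
    calc (T ^ m) a b ≤ ∑ c, (T ^ m) a c :=
          Finset.single_le_sum (fun c _ => hpownn m a c) (Finset.mem_univ b)
      _ = 1 := hpowrow m a
  -- entrywise convergence
  have hentry : ∀ a b, Tendsto (fun G : ℕ => (G:ℝ)⁻¹ * ∑ g ∈ Finset.range G, (T ^ g) a b)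
      atTop (nhds (Tbar a b)) := by
    intro a b
    have h1 := tendsto_pi_nhds.mp (tendsto_pi_nhds.mp hlim a) b
    simpa [Matrix.smul_apply, Matrix.sum_apply, smul_eq_mul] using h1
  -- μ is stationary for all powers
  have hstatpow : ∀ g : ℕ, μ ᵥ* T ^ g = μ := by
    intro g
    induction g with
    | zero => simp
    | succ g ih => rw [pow_succ, ← Matrix.vecMul_vecMul, ih, hstat]
  have hstatpow' : ∀ (g : ℕ) (c : Fin n), ∑ b, μ b * (T ^ g) b c = μ c := by
    intro g c
    have := congrFun (hstatpow g) c
    simpa [Matrix.vecMul, dotProduct] using this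
  intro s s'
  set v : Fin n → ℝ := fun a => Tbar a s' with hv
  -- columns of Tbar are harmonic: ∑ b, T a b * v b = v a
  have hharm : ∀ a, ∑ b, T a b * v b = v a := by
    intro a
    have h1 : Tendsto (fun G : ℕ => ∑ b, T a b * ((G:ℝ)⁻¹ * ∑ g ∈ Finset.range G, (T ^ g) b s'))
        atTop (nhds (∑ b, T a b * v b)) :=
      tendsto_finset_sum _ (fun b _ => (hentry b s').const_mul _)
    have heq : ∀ G : ℕ, ∑ b, T a b * ((G:ℝ)⁻¹ * ∑ g ∈ Finset.range G, (T ^ g) b s')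
        = (G:ℝ)⁻¹ * ∑ g ∈ Finset.range G, (T ^ g) a s'
          + (G:ℝ)⁻¹ * ((T ^ G) a s' - (T ^ 0) a s') := by
      intro G
      have step1 : ∑ b, T a b * ((G:ℝ)⁻¹ * ∑ g ∈ Finset.range G, (T ^ g) b s')
          = (G:ℝ)⁻¹ * ∑ g ∈ Finset.range G, (T ^ (g+1)) a s' := by
        have hb : ∀ b, T a b * ((G:ℝ)⁻¹ * ∑ g ∈ Finset.range G, (T ^ g) b s')
            = (G:ℝ)⁻¹ * ∑ g ∈ Finset.range G, T a b * (T ^ g) b s' := by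
          intro b
          rw [mul_left_comm, Finset.mul_sum]
        simp_rw [hb]
        rw [← Finset.mul_sum, Finset.sum_comm]
        congr 1
        refine Finset.sum_congr rfl fun g _ => ?_
        rw [pow_succ', Matrix.mul_apply]
      have step2 : ∑ g ∈ Finset.range G, (T ^ (g+1)) a s'
          = ∑ g ∈ Finset.range G, (T ^ g) a s' + ((T ^ G) a s' - (T ^ 0) a s') := by
        have := Finset.sum_range_succ' (fun g => (T ^ g) a s') G
        have h2 := Finset.sum_range_succ (fun g => (T ^ g) a s') G
        -- ∑_{range (G+1)} f = ∑_{range G} f(·+1) + f 0  and = ∑_{range G} f + f G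
        rw [h2] at this
        linarith
      rw [step1, step2, mul_add]
    have hsmall : Tendsto (fun G : ℕ => (G:ℝ)⁻¹ * ((T ^ G) a s' - (T ^ 0) a s'))
        atTop (nhds 0) := by
      refine squeeze_zero_norm (fun G : ℕ => ?_) tendsto_inv_atTop_nhds_zero_nat
      rw [Real.norm_eq_abs, abs_mul, abs_of_nonneg (by positivity : (0:ℝ) ≤ (G:ℝ)⁻¹)]
      have h1 := hpownn G a s'
      have h2 := hpowbd G a s'
      have h3 := hpownn 0 a s'
      have h4 := hpowbd 0 a s'
      have hd : |(T ^ G) a s' - (T ^ 0) a s'| ≤ 1 := by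
        rw [abs_le]; constructor <;> linarith
      calc (G:ℝ)⁻¹ * |(T ^ G) a s' - (T ^ 0) a s'| ≤ (G:ℝ)⁻¹ * 1 :=
            mul_le_mul_of_nonneg_left hd (by positivity)
        _ = (G:ℝ)⁻¹ := mul_one _
    have h2 : Tendsto (fun G : ℕ => ∑ b, T a b * ((G:ℝ)⁻¹ * ∑ g ∈ Finset.range G, (T ^ g) b s'))
        atTop (nhds (v a + 0)) := by
      simp_rw [heq]
      exact (hentry a s').add hsmall
    rw [add_zero] at h2
    exact tendsto_nhds_unique h1 h2
  -- harmonic for all powers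
  have hharmpow : ∀ (m : ℕ) (a : Fin n), ∑ b, (T ^ m) a b * v b = v a := by
    intro m
    induction m with
    | zero => intro a; simp [Matrix.one_apply]
    | succ m ih =>
      intro a
      simp_rw [pow_succ', Matrix.mul_apply, Finset.sum_mul]
      rw [Finset.sum_comm]
      simp_rw [mul_assoc, ← Finset.mul_sum]
      calc ∑ c, T a c * ∑ b, (T ^ m) c b * v b = ∑ c, T a c * v c := by
            refine Finset.sum_congr rfl fun c _ => ?_
            rw [ih c]
        _ = v a := hharm a
  -- maximum principle: v is constant
  have hne : (Finset.univ : Finset (Fin n)).Nonempty := ⟨s, Finset.mem_univ s⟩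
  obtain ⟨a0, -, ha0⟩ := Finset.exists_max_image Finset.univ v hne
  have hconst : ∀ b, v b = v a0 := by
    intro b
    by_contra hb
    have hblt : v b < v a0 := lt_of_le_of_ne (ha0 b (Finset.mem_univ b)) hb
    obtain ⟨m, -, hm⟩ := hirred a0 b
    have hlt : ∑ c, (T ^ m) a0 c * v c < ∑ c, (T ^ m) a0 c * v a0 := by
      apply Finset.sum_lt_sum
      · intro c _
        exact mul_le_mul_of_nonneg_left (ha0 c (Finset.mem_univ c)) (hpownn m a0 c)
      · exact ⟨b, Finset.mem_univ b, by exact mul_lt_mul_of_pos_left hblt hm⟩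
    rw [hharmpow m a0, ← Finset.sum_mul, hpowrow m a0, one_mul] at hlt
    exact lt_irrefl _ hlt
  -- μ-stationarity of Tbar at column s'
  have hmu : ∑ a, μ a * v a = μ s' := by
    have h1 : Tendsto (fun G : ℕ => ∑ a, μ a * ((G:ℝ)⁻¹ * ∑ g ∈ Finset.range G, (T ^ g) a s'))
        atTop (nhds (∑ a, μ a * v a)) :=
      tendsto_finset_sum _ (fun a _ => (hentry a s').const_mul _)
    have h2 : ∀ G : ℕ, 1 ≤ G → ∑ a, μ a * ((G:ℝ)⁻¹ * ∑ g ∈ Finset.range G, (T ^ g) a s')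
        = μ s' := by
      intro G hG
      have ha : ∀ a, μ a * ((G:ℝ)⁻¹ * ∑ g ∈ Finset.range G, (T ^ g) a s')
          = (G:ℝ)⁻¹ * ∑ g ∈ Finset.range G, μ a * (T ^ g) a s' := by
        intro a
        rw [mul_left_comm, Finset.mul_sum]
      simp_rw [ha]
      rw [← Finset.mul_sum, Finset.sum_comm]
      simp_rw [hstatpow']
      rw [Finset.sum_const, Finset.card_range, nsmul_eq_mul, ← mul_assoc,
        inv_mul_cancel₀ (by exact_mod_cast (by omega : G ≠ 0) : (G:ℝ) ≠ 0), one_mul]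
    have h3 : Tendsto (fun G : ℕ => ∑ a, μ a * ((G:ℝ)⁻¹ * ∑ g ∈ Finset.range G, (T ^ g) a s'))
        atTop (nhds (μ s')) := by
      apply Tendsto.congr' _ tendsto_const_nhds
      filter_upwards [Filter.eventually_ge_atTop 1] with G hG
      exact (h2 G hG).symm
    exact tendsto_nhds_unique h1 h3
  -- conclude
  have : ∑ a, μ a * v a = v a0 * 1 := by
    rw [← hsum, Finset.mul_sum]
    refine Finset.sum_congr rfl fun a _ => ?_
    rw [hconst a, mul_comm]
  have hfinal : v a0 = μ s' := by rw [← hmu, this, mul_one]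
  calc Tbar s s' = v s := rfl
    _ = v a0 := hconst s
    _ = μ s' := hfinal
end
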